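/- arXiv:2012.03200 — 6 statements merged into one kernel-verified Lean document; each statement's English description precedes it below -/
import Mathlib

section
/- Suppose K₀' lies in [Y_[J−1], Y_[J]] (with Y_[0] = −∞) and satisfies Σ_{j=1}^{J−1} ω_[j] θ⁻_[j] (K₀' − Y_[j]) − Σ_{j=J}^m ω_[j] θ⁺_[j] (Y_[j] − K₀') + S = 0. Then K₀' = ( Σ_{j=1}^{J−1} ω_[j] θ⁻_[j] Y_[j] + Σ_{j=J}^m ω_[j] θ⁺_[j] Y_[j] − S ) / ( Σ_{j=1}^{J−1} ω_[j] θ⁻_[j] + Σ_{j=J}^m ω_[j] θ⁺_[j] ), and K₀' is a global minimizer of F over ℝ, where F(K₀) = Σ_j ω_j ( (θ⁺_j/2)(Y_j − K₀)₊² + (θ⁻_j/2)(K₀ − Y_j)₊² ) + S·K₀. -/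
lemma sq_max_ineq (a b : ℝ) : (max a 0)^2 + 2*(max a 0)*(b-a) ≤ (max b 0)^2 := by
  rcases le_or_gt a 0 with ha | ha
  · rw [max_eq_right ha]
    simpa using sq_nonneg (max b 0)
  · rw [max_eq_left ha.le]
    rcases le_or_gt b 0 with hb | hb
    · rw [max_eq_right hb]; nlinarith
    · rw [max_eq_left hb.le]; nlinarith [sq_nonneg (b - a)]

/-- If `K₀' ∈ [Y_[J−1], Y_[J]]` (no lower bound when `J = 1`) satisfies the
first-order condition
`Σ_{j<J} ω_j θ⁻_j (K₀' − Y_j) − Σ_{j≥J} ω_j θ⁺_j (Y_j − K₀') + S = 0`,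
then `K₀'` equals the stated weighted-average formula and is a global minimizer of
`F(K₀) = Σ_j ω_j ((θ⁺_j/2)(Y_j − K₀)₊² + (θ⁻_j/2)(K₀ − Y_j)₊²) + S·K₀` over `ℝ`. -/
theorem foc_solution_is_global_min (m : ℕ) (hm : 1 ≤ m)
    (ω θp θm Y : ℕ → ℝ) (S : ℝ) (hS : 0 ≤ S)
    (hω : ∀ j ∈ Finset.Icc 1 m, 0 < ω j)
    (hθp : ∀ j ∈ Finset.Icc 1 m, 0 < θp j)
    (hθm : ∀ j ∈ Finset.Icc 1 m, 0 < θm j)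
    (hsorted : ∀ i ∈ Finset.Icc 1 m, ∀ j ∈ Finset.Icc 1 m, i ≤ j → Y i ≤ Y j)
    (J : ℕ) (hJ1 : 1 ≤ J) (hJm : J ≤ m)
    (K₀' : ℝ)
    (hlow : 2 ≤ J → Y (J - 1) ≤ K₀')
    (hup : K₀' ≤ Y J)
    (hfoc : (∑ j ∈ Finset.Icc 1 (J - 1), ω j * θm j * (K₀' - Y j))
        - (∑ j ∈ Finset.Icc J m, ω j * θp j * (Y j - K₀')) + S = 0)
    (F : ℝ → ℝ)
    (hF : F = fun K₀ => (∑ j ∈ Finset.Icc 1 m, ω j *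
        (θp j / 2 * (max (Y j - K₀) 0) ^ 2 + θm j / 2 * (max (K₀ - Y j) 0) ^ 2))
        + S * K₀) :
    K₀' = ((∑ j ∈ Finset.Icc 1 (J - 1), ω j * θm j * Y j)
            + (∑ j ∈ Finset.Icc J m, ω j * θp j * Y j) - S)
          / ((∑ j ∈ Finset.Icc 1 (J - 1), ω j * θm j)
            + (∑ j ∈ Finset.Icc J m, ω j * θp j))
    ∧ ∀ x : ℝ, F K₀' ≤ F x := by
  -- subset facts
  have hsub1 : ∀ j ∈ Finset.Icc 1 (J-1), j ∈ Finset.Icc 1 m := by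
    intro j hj; rw [Finset.mem_Icc] at *; omega
  have hsub2 : ∀ j ∈ Finset.Icc J m, j ∈ Finset.Icc 1 m := by
    intro j hj; rw [Finset.mem_Icc] at *; omega
  have hle : ∀ j ∈ Finset.Icc 1 (J-1), Y j ≤ K₀' := by
    intro j hj
    have hj' := hj; rw [Finset.mem_Icc] at hj'
    have hJ2 : 2 ≤ J := by omega
    refine le_trans (hsorted j (hsub1 j hj) (J-1) ?_ hj'.2) (hlow hJ2)
    rw [Finset.mem_Icc]; omega
  have hge : ∀ j ∈ Finset.Icc J m, K₀' ≤ Y j := by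
    intro j hj
    have hj' := hj; rw [Finset.mem_Icc] at hj'
    refine le_trans hup (hsorted J ?_ j (hsub2 j hj) hj'.1)
    rw [Finset.mem_Icc]; omega
  -- splitting sums
  have key : ∀ f : ℕ → ℝ, (∑ j ∈ Finset.Icc 1 (J-1), f j) + (∑ j ∈ Finset.Icc J m, f j)
      = ∑ j ∈ Finset.Icc 1 m, f j := by
    intro f
    have h1 : Finset.Icc 1 (J-1) = Finset.Ioc 0 (J-1) := by
      ext x; simp [Finset.mem_Icc, Finset.mem_Ioc]; omega
    have h2 : Finset.Icc J m = Finset.Ioc (J-1) m := by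
      ext x; simp [Finset.mem_Icc, Finset.mem_Ioc]; omega
    have h3 : Finset.Icc 1 m = Finset.Ioc 0 m := by
      ext x; simp [Finset.mem_Icc, Finset.mem_Ioc]; omega
    rw [h1, h2, h3]
    exact Finset.sum_Ioc_consecutive f (by omega) (by omega)
  set D : ℕ → ℝ := fun j => ω j * (θm j * max (K₀' - Y j) 0 - θp j * max (Y j - K₀') 0) with hDdef
  have hD1 : ∑ j ∈ Finset.Icc 1 (J-1), D j = ∑ j ∈ Finset.Icc 1 (J-1), ω j * θm j * (K₀' - Y j) := by
    refine Finset.sum_congr rfl (fun j hj => ?_)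
    have h := hle j hj
    rw [hDdef]; simp only
    rw [max_eq_left (by linarith), max_eq_right (by linarith)]; ring
  have hD2 : ∑ j ∈ Finset.Icc J m, D j = -∑ j ∈ Finset.Icc J m, ω j * θp j * (Y j - K₀') := by
    rw [← Finset.sum_neg_distrib]
    refine Finset.sum_congr rfl (fun j hj => ?_)
    have h := hge j hj
    rw [hDdef]; simp only
    rw [max_eq_right (show K₀' - Y j ≤ 0 by linarith),
        max_eq_left (show (0:ℝ) ≤ Y j - K₀' by linarith)]; ring
  have hDsum : ∑ j ∈ Finset.Icc 1 m, D j = -S := by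
    rw [← key D, hD1, hD2]; linarith
  constructor
  · -- the formula
    set A := ∑ j ∈ Finset.Icc 1 (J-1), ω j * θm j with hA
    set B := ∑ j ∈ Finset.Icc J m, ω j * θp j with hB
    have hBpos : 0 < B := by
      refine Finset.sum_pos (fun j hj => mul_pos (hω j (hsub2 j hj)) (hθp j (hsub2 j hj))) ?_
      exact ⟨J, by rw [Finset.mem_Icc]; omega⟩
    have hAnn : 0 ≤ A :=
      Finset.sum_nonneg (fun j hj => le_of_lt (mul_pos (hω j (hsub1 j hj)) (hθm j (hsub1 j hj))))
    have e1 : ∑ j ∈ Finset.Icc 1 (J-1), ω j * θm j * (K₀' - Y j)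
        = A * K₀' - ∑ j ∈ Finset.Icc 1 (J-1), ω j * θm j * Y j := by
      rw [hA, Finset.sum_mul, ← Finset.sum_sub_distrib]
      exact Finset.sum_congr rfl (fun j _ => by ring)
    have e2 : ∑ j ∈ Finset.Icc J m, ω j * θp j * (Y j - K₀')
        = (∑ j ∈ Finset.Icc J m, ω j * θp j * Y j) - B * K₀' := by
      rw [hB, Finset.sum_mul, ← Finset.sum_sub_distrib]
      exact Finset.sum_congr rfl (fun j _ => by ring)
    rw [e1, e2] at hfoc
    rw [eq_div_iff (by linarith)]
    linarith
  · -- global min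
    intro x
    have main : ∀ j ∈ Finset.Icc 1 m,
        ω j * (θp j / 2 * (max (Y j - K₀') 0) ^ 2 + θm j / 2 * (max (K₀' - Y j) 0) ^ 2)
          + D j * (x - K₀')
        ≤ ω j * (θp j / 2 * (max (Y j - x) 0) ^ 2 + θm j / 2 * (max (x - Y j) 0) ^ 2) := by
      intro j hj
      have h1 := sq_max_ineq (Y j - K₀') (Y j - x)
      have h2 := sq_max_ineq (K₀' - Y j) (x - Y j)
      have hωj := hω j hj
      have hpj := hθp j hj
      have hmj := hθm j hj
      have m1 := mul_le_mul_of_nonneg_left h1 (by positivity : (0:ℝ) ≤ ω j * θp j / 2)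
      have m2 := mul_le_mul_of_nonneg_left h2 (by positivity : (0:ℝ) ≤ ω j * θm j / 2)
      rw [hDdef]; simp only
      nlinarith [m1, m2]
    have hsum := Finset.sum_le_sum main
    rw [Finset.sum_add_distrib, ← Finset.sum_mul, hDsum] at hsum
    rw [hF]; simp only
    linarith
end

section
/- Under the same setting, a value K₀' ∈ [Y_[J−1], Y_[J]] solving the first-order condition exists if and only if Σ_{j=1}^{J−1} ω_[j] θ⁻_[j] (Y_[j] − Y_[J]) + Σ_{j=J}^m ω_[j] θ⁺_[j] (Y_[j] − Y_[J]) ≤ S ≤ Σ_{j=1}^{J−1} ω_[j] θ⁻_[j] (Y_[j] − Y_[J−1]) + Σ_{j=J}^m ω_[j] θ⁺_[j] (Y_[j] − Y_[J−1]) (with the upper bound interpreted as +∞ when J = 1). -/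
lemma sum_mul_sub2' (s : Finset ℕ) (f Y : ℕ → ℝ) (c : ℝ) :
    ∑ j ∈ s, f j * (c - Y j) = (∑ j ∈ s, f j) * c - (∑ j ∈ s, f j * Y j) := by
  rw [Finset.sum_mul, ← Finset.sum_sub_distrib]
  exact Finset.sum_congr rfl (fun j _ => by ring)

lemma sum_mul_sub' (s : Finset ℕ) (f Y : ℕ → ℝ) (c : ℝ) :
    ∑ j ∈ s, f j * (Y j - c) = (∑ j ∈ s, f j * Y j) - (∑ j ∈ s, f j) * c := by
  rw [Finset.sum_mul, ← Finset.sum_sub_distrib]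
  exact Finset.sum_congr rfl (fun j _ => by ring)

/-- A solution `K₀' ∈ [Y_[J−1], Y_[J]]` (no lower bound when `J = 1`) of the
first-order condition
`Σ_{j<J} ω_j θ⁻_j (K₀' − Y_j) + S = Σ_{j≥J} ω_j θ⁺_j (Y_j − K₀')`
exists if and only if
`Σ_{j<J} ω_j θ⁻_j (Y_j − Y_[J]) + Σ_{j≥J} ω_j θ⁺_j (Y_j − Y_[J]) ≤ S` and, when `J ≥ 2`,
`S ≤ Σ_{j<J} ω_j θ⁻_j (Y_j − Y_[J−1]) + Σ_{j≥J} ω_j θ⁺_j (Y_j − Y_[J−1])`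
(the upper bound being `+∞`, i.e. no condition, when `J = 1`). -/
theorem foc_solution_exists_iff (m : ℕ) (hm : 1 ≤ m)
    (ω θp θm Y : ℕ → ℝ) (S : ℝ) (hS : 0 ≤ S)
    (hω : ∀ j ∈ Finset.Icc 1 m, 0 < ω j)
    (hθp : ∀ j ∈ Finset.Icc 1 m, 0 < θp j)
    (hθm : ∀ j ∈ Finset.Icc 1 m, 0 < θm j)
    (hsorted : ∀ i ∈ Finset.Icc 1 m, ∀ j ∈ Finset.Icc 1 m, i ≤ j → Y i ≤ Y j)
    (J : ℕ) (hJ1 : 1 ≤ J) (hJm : J ≤ m) :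
    ((∑ j ∈ Finset.Icc 1 (J - 1), ω j * θm j * (Y j - Y J))
        + (∑ j ∈ Finset.Icc J m, ω j * θp j * (Y j - Y J)) ≤ S
      ∧ (2 ≤ J → S ≤ (∑ j ∈ Finset.Icc 1 (J - 1), ω j * θm j * (Y j - Y (J - 1)))
        + (∑ j ∈ Finset.Icc J m, ω j * θp j * (Y j - Y (J - 1)))))
    ↔ ∃ K₀' : ℝ, (2 ≤ J → Y (J - 1) ≤ K₀') ∧ K₀' ≤ Y J ∧
        (∑ j ∈ Finset.Icc 1 (J - 1), ω j * θm j * (K₀' - Y j)) + S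
          = ∑ j ∈ Finset.Icc J m, ω j * θp j * (Y j - K₀') := by
  set A1 := ∑ j ∈ Finset.Icc 1 (J - 1), ω j * θm j with hA1
  set A2 := ∑ j ∈ Finset.Icc J m, ω j * θp j with hA2
  set B1 := ∑ j ∈ Finset.Icc 1 (J - 1), ω j * θm j * Y j with hB1
  set B2 := ∑ j ∈ Finset.Icc J m, ω j * θp j * Y j with hB2
  have hA2pos : 0 < A2 := by
    apply Finset.sum_pos
    · intro j hj
      rw [Finset.mem_Icc] at hj
      have hj' : j ∈ Finset.Icc 1 m := Finset.mem_Icc.2 ⟨le_trans hJ1 hj.1, hj.2⟩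
      exact mul_pos (hω j hj') (hθp j hj')
    · exact ⟨J, Finset.mem_Icc.2 ⟨le_rfl, hJm⟩⟩
  have hA1nn : 0 ≤ A1 := by
    apply Finset.sum_nonneg
    intro j hj
    rw [Finset.mem_Icc] at hj
    have hj' : j ∈ Finset.Icc 1 m :=
      Finset.mem_Icc.2 ⟨hj.1, le_trans hj.2 (le_trans (Nat.sub_le J 1) hJm)⟩
    exact le_of_lt (mul_pos (hω j hj') (hθm j hj'))
  have hApos : 0 < A1 + A2 := by linarith
  have key : ∀ c : ℝ,
      (∑ j ∈ Finset.Icc 1 (J - 1), ω j * θm j * (Y j - c))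
        + ∑ j ∈ Finset.Icc J m, ω j * θp j * (Y j - c)
      = B1 + B2 - (A1 + A2) * c := by
    intro c
    rw [sum_mul_sub', sum_mul_sub']
    ring
  constructor
  · rintro ⟨h1, h2⟩
    rw [key] at h1
    refine ⟨(B1 + B2 - S) / (A1 + A2), ?_, ?_, ?_⟩
    · intro hJ2
      have h2' := h2 hJ2
      rw [key] at h2'
      rw [le_div_iff₀ hApos]
      linarith
    · rw [div_le_iff₀ hApos]
      linarith
    · have e1 : (∑ j ∈ Finset.Icc 1 (J - 1), ω j * θm j * ((B1 + B2 - S) / (A1 + A2) - Y j))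
          = A1 * ((B1 + B2 - S) / (A1 + A2)) - B1 := sum_mul_sub2' _ _ _ _
      have e2 : (∑ j ∈ Finset.Icc J m, ω j * θp j * (Y j - (B1 + B2 - S) / (A1 + A2)))
          = B2 - A2 * ((B1 + B2 - S) / (A1 + A2)) := sum_mul_sub' _ _ _ _
      rw [e1, e2]
      have hAne : A1 + A2 ≠ 0 := ne_of_gt hApos
      field_simp
      ring
  · rintro ⟨K, hlow, hup, heq⟩
    have heq' : (A1 + A2) * K = B1 + B2 - S := by
      have e1 : (∑ j ∈ Finset.Icc 1 (J - 1), ω j * θm j * (K - Y j))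
          = A1 * K - B1 := sum_mul_sub2' _ _ _ _
      have e2 : (∑ j ∈ Finset.Icc J m, ω j * θp j * (Y j - K))
          = B2 - A2 * K := sum_mul_sub' _ _ _ _
      rw [e1, e2] at heq
      linarith
    constructor
    · rw [key]
      have : (A1 + A2) * K ≤ (A1 + A2) * Y J :=
        mul_le_mul_of_nonneg_left hup (le_of_lt hApos)
      linarith
    · intro hJ2
      rw [key]
      have : (A1 + A2) * Y (J - 1) ≤ (A1 + A2) * K :=
        mul_le_mul_of_nonneg_left (hlow hJ2) (le_of_lt hApos)
      linarith
end

section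
/- In the allocation problem with quadratic asymmetric costs, at an unconstrained stationary point it is impossible for some regions to have strict surpluses while others have shortages: if K^(i) > X^(i) for i in a non-empty proper subset and K^(i) ≤ X^(i) for the rest, where the K^(i) satisfy the first-order conditions ω^(i)θ⁻^(i)(K^(i) − X^(i)) + μ = 0 for surplus regions and ω^(i)θ⁺^(i)(K^(i) − X^(i)) + μ = 0 for shortage regions with Σ_i K^(i) = K, then K > Σ_r X^(r) and K ≤ Σ_r X^(r) must both hold, a contradiction. -/
/-- At an unconstrained stationary point of the allocation problem it is
impossible for a non-empty proper subset of regions to be in strict surplus while the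
rest are in shortage: the first-order conditions would force both `K > Σ_r X r` and
`K ≤ Σ_r X r`, a contradiction. -/
theorem no_mixed_surplus_shortage (n : ℕ) (hn : 2 ≤ n)
    (X ω θp θm : Fin n → ℝ)
    (hω : ∀ i, 0 < ω i) (hθp : ∀ i, 0 < θp i) (hθm : ∀ i, 0 < θm i)
    (K : ℝ) (Kalloc : Fin n → ℝ) (μ : ℝ)
    (s : Finset (Fin n)) (hs_ne : s.Nonempty) (hs_proper : s ≠ Finset.univ)
    (hsurplus : ∀ i ∈ s, X i < Kalloc i ∧ ω i * θm i * (Kalloc i - X i) + μ = 0)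
    (hshortage : ∀ i ∉ s, Kalloc i ≤ X i ∧ ω i * θp i * (Kalloc i - X i) + μ = 0)
    (hbudget : (∑ i, Kalloc i) = K) :
    False := by
  obtain ⟨i, hi⟩ := hs_ne
  obtain ⟨hXi, hfoc⟩ := hsurplus i hi
  have hμ : μ < 0 := by nlinarith [mul_pos (mul_pos (hω i) (hθm i)) (sub_pos.mpr hXi)]
  obtain ⟨j, hj⟩ : ∃ j, j ∉ s := by
    by_contra h
    push_neg at h
    exact hs_proper (Finset.eq_univ_iff_forall.mpr h)
  obtain ⟨hXj, hfocj⟩ := hshortage j hj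
  nlinarith [mul_pos (hω j) (hθp j), mul_nonneg (le_of_lt (mul_pos (hω j) (hθp j))) (sub_nonneg.mpr hXj)]
end

section
/- In the KKT analysis of the shortage allocation problem, if λ₁^(i) > 0 for some i and λ₂^(i) > 0 for some i, a contradiction arises: the stationarity conditions force μ = −λ₂^[n] < 0 and μ = ω^[1]θ⁺^[1] X^[1] + λ₁^[1] > 0 simultaneously. Hence no KKT point has both a region with binding lower bound (K^(i)=0) and a region with binding upper bound (K^(i)=X^(i)) when all X^(i) > 0. -/
/-- In the KKT analysis of the shortage allocation problem with all
demands positive, no KKT point can have both a region with binding lower bound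
(`lam₁ > 0`, hence `K i = 0`) and a region with binding upper bound (`lam₂ > 0`, hence
`K i = X i`): the stationarity conditions force `μ < 0` and `μ > 0` simultaneously. -/
theorem kkt_no_both_bounds_binding (n : ℕ) (hn : 1 ≤ n)
    (X ω θp : Fin n → ℝ)
    (hX : ∀ i, 0 < X i) (hω : ∀ i, 0 < ω i) (hθp : ∀ i, 0 < θp i)
    (K : ℝ) (Kalloc lam₁ lam₂ : Fin n → ℝ) (μ : ℝ)
    (hstat : ∀ i, ω i * θp i * (Kalloc i - X i) - lam₁ i + lam₂ i + μ = 0)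
    (hbox : ∀ i, 0 ≤ Kalloc i ∧ Kalloc i ≤ X i)
    (hlam₁ : ∀ i, 0 ≤ lam₁ i) (hcs₁ : ∀ i, lam₁ i * Kalloc i = 0)
    (hlam₂ : ∀ i, 0 ≤ lam₂ i) (hcs₂ : ∀ i, lam₂ i * (Kalloc i - X i) = 0)
    (hbudget : (∑ i, Kalloc i) = K)
    (i₁ : Fin n) (hi₁ : 0 < lam₁ i₁)
    (i₂ : Fin n) (hi₂ : 0 < lam₂ i₂) :
    False := by
  -- At i₁: lam₁ i₁ > 0 forces Kalloc i₁ = 0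
  have hK1 : Kalloc i₁ = 0 := by
    by_contra h
    exact h (by have := hcs₁ i₁; exact (mul_eq_zero.1 this).resolve_left (ne_of_gt hi₁))
  -- then Kalloc i₁ - X i₁ ≠ 0, so lam₂ i₁ = 0
  have hl2 : lam₂ i₁ = 0 := by
    have hne : Kalloc i₁ - X i₁ ≠ 0 := by
      rw [hK1]; simpa using (ne_of_lt (hX i₁)).symm ∘ (by intro h; linarith)
    exact (mul_eq_zero.1 (hcs₂ i₁)).resolve_right hne
  -- At i₂: lam₂ i₂ > 0 forces Kalloc i₂ = X i₂
  have hK2 : Kalloc i₂ - X i₂ = 0 :=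
    (mul_eq_zero.1 (hcs₂ i₂)).resolve_left (ne_of_gt hi₂)
  have hl1 : lam₁ i₂ = 0 := by
    have hne : Kalloc i₂ ≠ 0 := by
      have := hX i₂; intro h; rw [h] at hK2; linarith
    exact (mul_eq_zero.1 (hcs₁ i₂)).resolve_right hne
  have h1 := hstat i₁
  have h2 := hstat i₂
  have hpos : 0 < ω i₁ * θp i₁ * X i₁ :=
    mul_pos (mul_pos (hω i₁) (hθp i₁)) (hX i₁)
  rw [hK1] at h1
  rw [hK2] at h2
  rw [hl2] at h1
  rw [hl1] at h2
  nlinarith [hlam₁ i₁, hlam₂ i₂]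
end

section
/- In the shortage allocation problem, the case λ₁^(i) = 0 for all i and λ₂^(i) > 0 for some i is impossible: solving the corresponding KKT system yields λ₂^(i) = −(Σ_r X^(r) − K) / Σ_{r=1}^{n−Ĩ} (1/(ω^(r)θ⁺^(r))) ≤ 0 for the binding regions, contradicting λ₂^(i) > 0. -/
/-- In the shortage allocation problem (`K ≤ Σ_r X r`), the KKT case
`lam₁ ≡ 0` and `lam₂ i > 0` for some `i` is impossible: solving the KKT system yields
`lam₂ i ≤ 0` on the binding set, a contradiction. -/
theorem kkt_upper_binding_impossible (n : ℕ) (hn : 1 ≤ n)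
    (X ω θp : Fin n → ℝ)
    (hX : ∀ i, 0 < X i) (hω : ∀ i, 0 < ω i) (hθp : ∀ i, 0 < θp i)
    (K : ℝ) (hK : K ≤ ∑ r, X r)
    (Kalloc lam₂ : Fin n → ℝ) (μ : ℝ)
    (s : Finset (Fin n)) (hs_ne : s.Nonempty) (hs_proper : s ≠ Finset.univ)
    (hbind : ∀ i ∈ s, 0 < lam₂ i ∧ Kalloc i = X i ∧ lam₂ i + μ = 0)
    (hfree : ∀ i ∉ s, ω i * θp i * (Kalloc i - X i) + μ = 0)
    (hbox : ∀ i, 0 ≤ Kalloc i ∧ Kalloc i ≤ X i)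
    (hbudget : (∑ i, Kalloc i) = K) :
    False := by
  obtain ⟨j, hj⟩ := hs_ne
  obtain ⟨hlj, _, hmj⟩ := hbind j hj
  have hmu : μ < 0 := by linarith
  have hi : ∃ i, i ∉ s := by
    by_contra h
    push_neg at h
    exact hs_proper (Finset.eq_univ_iff_forall.2 h)
  obtain ⟨i, hi⟩ := hi
  have hf := hfree i hi
  have hpos : 0 < ω i * θp i := mul_pos (hω i) (hθp i)
  have h1 : 0 < ω i * θp i * (Kalloc i - X i) := by linarith
  have h2 : 0 < Kalloc i - X i := by nlinarith

  exact absurd (hbox i).2 (by linarith)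
end

section
/- Given sorted demands X^[1] ≥ … ≥ X^[n] > 0 and supply K with 0 ≤ K ≤ Σ_r X^[r], suppose I ∈ {1,…,n} satisfies: K ≤ Σ_{r=1}^I X^[r]; X^[i] ≥ B̃^[i](Σ_{r=1}^I X^[r] − K) for all i ≤ I; and X^[i] < B̃^[i](Σ_{r=1}^I X^[r] − K) for all i > I, where B̃^[i] = (1/(ω^[i]θ⁺^[i]))/Σ_{r=1}^I (1/(ω^[r]θ⁺^[r])). Then the allocation K^[i] = X^[i] − B̃^[i](Σ_{r=1}^I X^[r] − K) for i ≤ I and K^[i] = 0 for i > I is feasible (0 ≤ K^[i] ≤ X^[i], Σ_i K^[i] = K) and satisfies the KKT conditions, hence is optimal for the convex problem. -/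
/-- Given demands sorted in descending order `X 0 ≥ … ≥ X (n−1) > 0` and
supply `0 ≤ K ≤ Σ_r X r`, suppose `I ∈ {1,…,n}` passes the frugality test:
`K ≤ Σ_{r<I} X r`; `X i ≥ B̃ i (Σ_{r<I} X r − K)` for the top `I` regions; and
`X i < B̃ i (Σ_{r<I} X r − K)` for the remaining regions, where
`B̃ i = (1/(ω i θ⁺ i)) / Σ_{r<I} (1/(ω r θ⁺ r))`. Then the allocation
`K' i = X i − B̃ i (Σ_{r<I} X r − K)` for the top `I` regions and `K' i = 0` otherwise
is feasible (`0 ≤ K' i ≤ X i`, `Σ_i K' i = K`) and optimal for the convex problem of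
minimizing `Σ_i ω i (θ⁺ i/2)(X i − K' i)²` over the feasible set. -/
theorem frugal_allocation_optimal (n : ℕ) (hn : 1 ≤ n)
    (X ω θp : Fin n → ℝ)
    (hsorted : ∀ i j : Fin n, i ≤ j → X j ≤ X i)
    (hX : ∀ i, 0 < X i) (hω : ∀ i, 0 < ω i) (hθp : ∀ i, 0 < θp i)
    (K : ℝ) (hK0 : 0 ≤ K) (hK : K ≤ ∑ r, X r)
    (I : ℕ) (hI1 : 1 ≤ I) (hIn : I ≤ n)
    (B : Fin n → ℝ)
    (hB : B = fun i => (1 / (ω i * θp i)) /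
        (∑ r ∈ Finset.univ.filter (fun r : Fin n => (r : ℕ) < I), 1 / (ω r * θp r)))
    (Y : ℝ)
    (hY : Y = (∑ r ∈ Finset.univ.filter (fun r : Fin n => (r : ℕ) < I), X r) - K)
    (hcover : K ≤ ∑ r ∈ Finset.univ.filter (fun r : Fin n => (r : ℕ) < I), X r)
    (htop : ∀ i : Fin n, (i : ℕ) < I → B i * Y ≤ X i)
    (hrest : ∀ i : Fin n, I ≤ (i : ℕ) → X i < B i * Y)
    (K' : Fin n → ℝ)
    (hK' : K' = fun i : Fin n => if (i : ℕ) < I then X i - B i * Y else 0) :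
    (∀ i, 0 ≤ K' i ∧ K' i ≤ X i)
    ∧ (∑ i, K' i) = K
    ∧ (∀ L : Fin n → ℝ, (∑ i, L i) = K → (∀ i, 0 ≤ L i ∧ L i ≤ X i) →
        (∑ i, ω i * (θp i / 2) * (X i - K' i) ^ 2)
          ≤ ∑ i, ω i * (θp i / 2) * (X i - L i) ^ 2) := by

  have hS : (Finset.univ.filter (fun r : Fin n => (r : ℕ) < I)).Nonempty :=
    ⟨⟨0, hn⟩, by simp only [Finset.mem_filter, Finset.mem_univ, true_and]; omega⟩
  have hc : 0 < ∑ r ∈ Finset.univ.filter (fun r : Fin n => (r : ℕ) < I),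
      1 / (ω r * θp r) :=
    Finset.sum_pos (fun r _ => div_pos one_pos (mul_pos (hω r) (hθp r))) hS
  set c := ∑ r ∈ Finset.univ.filter (fun r : Fin n => (r : ℕ) < I),
      1 / (ω r * θp r) with hcdef
  have hY0 : 0 ≤ Y := by rw [hY]; linarith
  have hBpos : ∀ i, 0 < B i := by
    intro i; rw [hB]; exact div_pos (div_pos one_pos (mul_pos (hω i) (hθp i))) hc
  have hBY : ∀ i, 0 ≤ B i * Y := fun i => mul_nonneg (hBpos i).le hY0
  have hfeas : ∀ i, 0 ≤ K' i ∧ K' i ≤ X i := by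
    intro i
    rw [hK']
    by_cases h : (i : ℕ) < I
    · simp only [h, if_true]
      exact ⟨by linarith [htop i h], by linarith [hBY i]⟩
    · simp only [h, if_false]
      exact ⟨le_refl 0, (hX i).le⟩
  have hBsum : ∑ r ∈ Finset.univ.filter (fun r : Fin n => (r : ℕ) < I), B r = 1 := by
    rw [hB, ← Finset.sum_div, ← hcdef, div_self hc.ne']
  have hsum : (∑ i, K' i) = K := by
    rw [hK']
    rw [show (∑ i : Fin n, if (i : ℕ) < I then X i - B i * Y else 0)
        = ∑ i ∈ Finset.univ.filter (fun r : Fin n => (r : ℕ) < I), (X i - B i * Y)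
      from (Finset.sum_filter _ _).symm]
    rw [Finset.sum_sub_distrib, ← Finset.sum_mul, hBsum, one_mul, hY]
    ring
  refine ⟨hfeas, hsum, ?_⟩
  intro L hL hLfeas
  set lam := Y / c with hlam
  have hlam0 : 0 ≤ lam := div_nonneg hY0 hc.le
  have hgrad : ∀ i : Fin n, ω i * θp i * (B i * Y) = lam := by
    intro i
    rw [hB, hlam]
    have h1 : ω i * θp i ≠ 0 := (mul_pos (hω i) (hθp i)).ne'
    field_simp
    field_simp [(hω i).ne', (hθp i).ne']
  have key : ∀ i : Fin n, lam * (K' i - L i)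
      ≤ ω i * (θp i / 2) * (X i - L i) ^ 2 - ω i * (θp i / 2) * (X i - K' i) ^ 2 := by
    intro i
    have hquad : ω i * θp i * (X i - K' i) * (K' i - L i)
        ≤ ω i * (θp i / 2) * (X i - L i) ^ 2 - ω i * (θp i / 2) * (X i - K' i) ^ 2 := by
      nlinarith [mul_nonneg (mul_nonneg (hω i).le (hθp i).le) (sq_nonneg (K' i - L i)),
        sq_nonneg (K' i - L i)]
    refine le_trans ?_ hquad
    by_cases h : (i : ℕ) < I
    · have hK'i : K' i = X i - B i * Y := by rw [hK']; simp [h]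
      have : ω i * θp i * (X i - K' i) = lam := by
        rw [hK']; simp only [h, if_true]
        rw [show X i - (X i - B i * Y) = B i * Y by ring]
        exact hgrad i
      rw [← this]
    · push_neg at h
      have hK'i : K' i = 0 := by rw [hK']; simp [not_lt.mpr h]
      have hlt : ω i * θp i * X i < lam := by
        have := hrest i h
        have h2 : ω i * θp i * X i < ω i * θp i * (B i * Y) := by
          have hpos : 0 < ω i * θp i := mul_pos (hω i) (hθp i)
          exact (mul_lt_mul_iff_right₀ hpos).mpr this
        rw [hgrad i] at h2
        exact h2
      rw [hK'i]
      have hL0 := (hLfeas i).1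
      nlinarith
  have hsumkey : ∑ i, lam * (K' i - L i)
      ≤ ∑ i, (ω i * (θp i / 2) * (X i - L i) ^ 2 - ω i * (θp i / 2) * (X i - K' i) ^ 2) :=
    Finset.sum_le_sum (fun i _ => key i)
  have hzero : ∑ i, lam * (K' i - L i) = 0 := by
    rw [← Finset.mul_sum, Finset.sum_sub_distrib, hsum, hL, sub_self, mul_zero]
  rw [hzero, Finset.sum_sub_distrib] at hsumkey
  linarith
end
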